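/- arXiv:2601.05341 — 2 statements merged into one kernel-verified Lean document; each statement's English description precedes it below -/
import Mathlib

section
/- Let δ : [0,∞) → ℝ be continuous, nonnegative, and bounded by M > 0, and suppose there is a constant C > 0 such that ∫_{t₁}^{t₂} δ(τ) dτ ≤ C(δ(t₁) + δ(t₂)) for all 0 ≤ t₁ ≤ t₂. Then for every t ≥ 0 one has ∫_{t}^{∞} δ(τ) dτ ≤ 2CM · e^{-t/C}. -/
open MeasureTheory Set

/-- Let `δ : [0,∞) → ℝ` be continuous, nonnegative, and bounded by `M > 0`,
and suppose there is a constant `C > 0` such that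
`∫_{t₁}^{t₂} δ(τ) dτ ≤ C (δ(t₁) + δ(t₂))` for all `0 ≤ t₁ ≤ t₂`.
Then for every `t ≥ 0` one has `∫_{t}^{∞} δ(τ) dτ ≤ 2 C M · e^{-t/C}`. -/
theorem virial_tail_exponential_decay
    (δ : ℝ → ℝ) (M C : ℝ)
    (hcont : ContinuousOn δ (Ici 0))
    (hnonneg : ∀ t, 0 ≤ t → 0 ≤ δ t)
    (hM : 0 < M)
    (hbound : ∀ t, 0 ≤ t → δ t ≤ M)
    (hC : 0 < C)
    (hint : ∀ t₁ t₂, 0 ≤ t₁ → t₁ ≤ t₂ → ∫ τ in t₁..t₂, δ τ ≤ C * (δ t₁ + δ t₂)) :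
    ∀ t, 0 ≤ t →
      ∫⁻ τ in Ioi t, ENNReal.ofReal (δ τ)
        ≤ ENNReal.ofReal (2 * C * M * Real.exp (-t / C)) := by
  -- Replace δ by a globally continuous version
  set f : ℝ → ℝ := fun x => δ (max x 0) with hf_def
  have hfcont : Continuous f :=
    hcont.comp_continuous (continuous_id.max continuous_const) (fun x => le_max_right x 0)
  have hfeq : ∀ x, 0 ≤ x → f x = δ x := by
    intro x hx; simp [hf_def, max_eq_left hx]
  have hfnonneg : ∀ x, 0 ≤ f x := fun x => hnonneg _ (le_max_right x 0)
  have hfbound : ∀ x, f x ≤ M := fun x => hbound _ (le_max_right x 0)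
  have hfint : ∀ t₁ t₂, 0 ≤ t₁ → t₁ ≤ t₂ → ∫ τ in t₁..t₂, f τ ≤ C * (f t₁ + f t₂) := by
    intro t₁ t₂ h1 h12
    have : ∫ τ in t₁..t₂, f τ = ∫ τ in t₁..t₂, δ τ := by
      apply intervalIntegral.integral_congr
      intro x hx
      rw [uIcc_of_le h12] at hx
      exact hfeq x (h1.trans hx.1)
    rw [this, hfeq _ h1, hfeq _ (h1.trans h12)]
    exact hint t₁ t₂ h1 h12
  have hfii : ∀ a b : ℝ, IntervalIntegrable f volume a b := fun a b =>
    hfcont.intervalIntegrable a b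
  have hfbd : ∀ t₁ t₂ : ℝ, 0 ≤ t₁ → t₁ ≤ t₂ → ∫ τ in t₁..t₂, f τ ≤ 2 * C * M := by
    intro t₁ t₂ h1 h12
    calc ∫ τ in t₁..t₂, f τ ≤ C * (f t₁ + f t₂) := hfint t₁ t₂ h1 h12
    _ ≤ C * (M + M) := by
        apply mul_le_mul_of_nonneg_left (add_le_add (hfbound _) (hfbound _)) hC.le
    _ = 2 * C * M := by ring
  -- Integrability on Ioi s for s ≥ 0
  have hIoi : ∀ s : ℝ, 0 ≤ s → IntegrableOn f (Ioi s) := by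
    intro s hs
    apply integrableOn_Ioi_of_intervalIntegral_norm_bounded (μ := volume)
      (l := Filter.atTop) (2 * C * M) s
      (fun i : ℝ => hfcont.integrableOn_Ioc) Filter.tendsto_id
    filter_upwards [Filter.eventually_ge_atTop s] with i hi
    simp only [id]
    have : ∫ x in s..i, ‖f x‖ = ∫ x in s..i, f x := by
      apply intervalIntegral.integral_congr
      intro x _
      exact Real.norm_of_nonneg (hfnonneg x)
    rw [this]
    exact hfbd s i hs hi
  -- The tail function
  set G : ℝ → ℝ := fun s => ∫ τ in Ioi s, f τ with hG_def
  have hGtend : ∀ s : ℝ, 0 ≤ s →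
      Filter.Tendsto (fun T => ∫ τ in s..T, f τ) Filter.atTop (nhds (G s)) := by
    intro s hs
    exact intervalIntegral_tendsto_integral_Ioi s (hIoi s hs) Filter.tendsto_id
  have hGbd : ∀ s : ℝ, 0 ≤ s → G s ≤ 2 * C * M := by
    intro s hs
    refine le_of_tendsto (hGtend s hs) ?_
    filter_upwards [Filter.eventually_ge_atTop s] with T hT
    exact hfbd s T hs hT
  have hGnonneg : ∀ s : ℝ, 0 ≤ G s := by
    intro s
    exact setIntegral_nonneg measurableSet_Ioi (fun x _ => hfnonneg x)
  -- decomposition: G s = G 0 - ∫ 0..s f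
  have hGsplit : ∀ s : ℝ, 0 ≤ s → G 0 = (∫ τ in (0:ℝ)..s, f τ) + G s := by
    intro s hs
    have hu : Ioc 0 s ∪ Ioi s = Ioi (0:ℝ) := Ioc_union_Ioi_eq_Ioi hs
    have hd : Disjoint (Ioc 0 s) (Ioi s) := Ioc_disjoint_Ioi le_rfl
    rw [hG_def]
    simp only
    rw [← hu, setIntegral_union hd measurableSet_Ioi
      (hfcont.integrableOn_Ioc) (hIoi s hs),
      intervalIntegral.integral_of_le hs]
  -- a sequence along which f tends to 0
  have hseq : ∃ u : ℕ → ℝ, (∀ n : ℕ, (n : ℝ) ≤ u n) ∧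
      Filter.Tendsto (fun n => f (u n)) Filter.atTop (nhds 0) := by
    have hmin : ∀ n : ℕ, ∃ x ∈ Icc (n : ℝ) (n + 1), IsMinOn f (Icc (n : ℝ) (n + 1)) x := by
      intro n
      exact isCompact_Icc.exists_isMinOn (nonempty_Icc.2 (by linarith)) hfcont.continuousOn
    choose u hu hmin using hmin
    refine ⟨u, fun n : ℕ => (hu n).1, ?_⟩
    have hle : ∀ n : ℕ, f (u n) ≤ ∫ τ in (n : ℝ)..(n + 1 : ℝ), f τ := by
      intro n
      have : ∫ τ in (n : ℝ)..(n + 1 : ℝ), f (u n) ≤ ∫ τ in (n : ℝ)..(n + 1 : ℝ), f τ := by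
        apply intervalIntegral.integral_mono_on (by linarith)
          (intervalIntegrable_const) (hfii _ _)
        intro x hx
        exact hmin n hx
      simpa using this
    have hto : Filter.Tendsto (fun n : ℕ => ∫ τ in (n : ℝ)..(n + 1 : ℝ), f τ)
        Filter.atTop (nhds 0) := by
      have h1 : Filter.Tendsto (fun n : ℕ => ∫ τ in (0:ℝ)..(n : ℝ), f τ)
          Filter.atTop (nhds (G 0)) :=
        (hGtend 0 le_rfl).comp tendsto_natCast_atTop_atTop
      have h2 : Filter.Tendsto (fun n : ℕ => ∫ τ in (0:ℝ)..((n : ℝ) + 1), f τ)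
          Filter.atTop (nhds (G 0)) :=
        (hGtend 0 le_rfl).comp (Filter.tendsto_atTop_add_const_right _ 1
          tendsto_natCast_atTop_atTop)
      have heq : ∀ n : ℕ, ∫ τ in (n : ℝ)..(n + 1 : ℝ), f τ =
          (∫ τ in (0:ℝ)..((n : ℝ) + 1), f τ) - ∫ τ in (0:ℝ)..(n : ℝ), f τ := by
        intro n
        rw [← intervalIntegral.integral_add_adjacent_intervals (hfii 0 n) (hfii n (n+1))]
        ring
      simp only [heq]
      simpa using h2.sub h1
    have hlow : ∀ n : ℕ, 0 ≤ f (u n) := fun n => hfnonneg _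
    exact squeeze_zero hlow hle hto
  obtain ⟨u, hu_ge, hu_to⟩ := hseq
  have hu_top : Filter.Tendsto u Filter.atTop Filter.atTop :=
    Filter.tendsto_atTop_mono hu_ge tendsto_natCast_atTop_atTop
  -- key estimate G s ≤ C * f s
  have hkey : ∀ s : ℝ, 0 ≤ s → G s ≤ C * f s := by
    intro s hs
    have h1 : Filter.Tendsto (fun n : ℕ => ∫ τ in s..(u n), f τ)
        Filter.atTop (nhds (G s)) := (hGtend s hs).comp hu_top
    have h2 : Filter.Tendsto (fun n : ℕ => C * (f s + f (u n)))
        Filter.atTop (nhds (C * (f s + 0))) :=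
      (tendsto_const_nhds.add hu_to).const_mul C
    rw [add_zero] at h2
    refine le_of_tendsto_of_tendsto h1 h2 ?_
    filter_upwards [hu_top.eventually (Filter.eventually_ge_atTop s)] with n hn
    exact hfint s (u n) hs hn
  -- Gronwall argument
  set g : ℝ → ℝ := fun s => G 0 - ∫ τ in (0:ℝ)..s, f τ with hg_def
  have hgG : ∀ s : ℝ, 0 ≤ s → g s = G s := by
    intro s hs
    rw [hg_def]; simp only
    rw [hGsplit s hs]; ring
  have hgderiv : ∀ x : ℝ, HasDerivAt g (-f x) x := by
    intro x
    have h := intervalIntegral.integral_hasDerivAt_right (hfii 0 x)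
      (hfcont.stronglyMeasurableAtFilter _ _) hfcont.continuousAt
    simpa using (h.const_sub (G 0))
  set H : ℝ → ℝ := fun s => g s * Real.exp (s / C) with hH_def
  have hHderiv : ∀ x : ℝ,
      HasDerivAt H ((-f x) * Real.exp (x / C) + g x * (Real.exp (x / C) * (1 / C))) x := by
    intro x
    have he : HasDerivAt (fun s : ℝ => Real.exp (s / C)) (Real.exp (x / C) * (1 / C)) x := by
      have : HasDerivAt (fun s : ℝ => s / C) (1 / C) x := by
        simpa using (hasDerivAt_id x).div_const C
      exact (Real.hasDerivAt_exp (x / C)).comp x this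
    exact (hgderiv x).mul he
  have hH_anti : AntitoneOn H (Ici 0) := by
    apply antitoneOn_of_deriv_nonpos (convex_Ici 0)
      (fun x _ => (hHderiv x).continuousAt.continuousWithinAt)
      (fun x hx => ((hHderiv x).differentiableAt).differentiableWithinAt)
    intro x hx
    rw [interior_Ici] at hx
    rw [(hHderiv x).deriv]
    have hx0 : (0:ℝ) ≤ x := le_of_lt hx
    have h1 : g x ≤ C * f x := by rw [hgG x hx0]; exact hkey x hx0
    have hexp : 0 < Real.exp (x / C) := Real.exp_pos _
    have : (-f x) * Real.exp (x / C) + g x * (Real.exp (x / C) * (1 / C))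
        = (g x / C - f x) * Real.exp (x / C) := by
      field_simp
      ring
    rw [this]
    apply mul_nonpos_of_nonpos_of_nonneg _ hexp.le
    rw [sub_nonpos, div_le_iff₀ hC]
    linarith [h1]
  -- conclude
  intro t ht
  have hGt : G t ≤ 2 * C * M * Real.exp (-t / C) := by
    have h1 : G t * Real.exp (t / C) ≤ 2 * C * M := by
      have h2 : g t * Real.exp (t / C) ≤ g 0 * Real.exp (0 / C) :=
        hH_anti self_mem_Ici ht ht
      rw [hgG t ht] at h2
      calc G t * Real.exp (t / C) ≤ g 0 * Real.exp (0 / C) := h2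
      _ = G 0 := by simp [hg_def]
      _ ≤ 2 * C * M := hGbd 0 le_rfl
    have hexp : 0 < Real.exp (t / C) := Real.exp_pos _
    rw [neg_div, Real.exp_neg, ← div_eq_mul_inv, le_div_iff₀ hexp]
    exact h1
  have hInt : IntegrableOn f (Ioi t) := hIoi t ht
  have heq1 : ∫⁻ τ in Ioi t, ENNReal.ofReal (δ τ) = ∫⁻ τ in Ioi t, ENNReal.ofReal (f τ) := by
    apply setLIntegral_congr_fun measurableSet_Ioi
    intro x hx
    show ENNReal.ofReal (δ x) = ENNReal.ofReal (f x)
    rw [hfeq x (ht.trans hx.le)]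
  have heq2 : ∫⁻ τ in Ioi t, ENNReal.ofReal (f τ) = ENNReal.ofReal (G t) := by
    rw [← ofReal_integral_eq_lintegral_ofReal hInt]
    exact Filter.Eventually.of_forall (fun x => hfnonneg x)
  rw [heq1, heq2]
  exact ENNReal.ofReal_le_ofReal hGt
end

section
/- Let δ : [0,∞) → ℝ be nonnegative, measurable, and locally integrable, let c > 0, K > 0, and suppose ∫_{t}^{∞} δ(τ) dτ ≤ K e^{-ct} for all t ≥ 0. Then for every a ∈ (0,1) and every t ≥ 0 one has ∫_{t}^{∞} δ(τ)^{a} dτ ≤ (K^{a}/(1 - e^{-ca})) · e^{-cat}. -/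
open MeasureTheory Set
open scoped ENNReal

private lemma holder_step (F : ℝ → ℝ≥0∞) (hF : Measurable F) {a : ℝ} (s : ℝ)
    (ha : a ∈ Ioo (0:ℝ) 1) :
    ∫⁻ τ in Ioc s (s+1), F τ ^ a ≤ (∫⁻ τ in Ioc s (s+1), F τ) ^ a := by
  have hpq : Real.HolderConjugate (1/a) (1/(1-a)) := by
    refine Real.holderConjugate_iff.mpr ⟨?_, ?_⟩
    · rw [lt_div_iff₀ ha.1]; linarith [ha.2]
    · field_simp; ring
  have h := ENNReal.lintegral_mul_le_Lp_mul_Lq (volume.restrict (Ioc s (s+1))) hpq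
    (f := fun τ => F τ ^ a) (g := fun _ => 1)
    ((hF.pow_const a).aemeasurable) aemeasurable_const
  simp only [Pi.mul_apply, mul_one] at h
  have h1 : ∀ τ, (F τ ^ a) ^ (1/a) = F τ := by
    intro τ
    rw [← ENNReal.rpow_mul, mul_one_div, div_self ha.1.ne', ENNReal.rpow_one]
  calc ∫⁻ τ in Ioc s (s+1), F τ ^ a ≤ _ := h
    _ = (∫⁻ τ in Ioc s (s+1), F τ) ^ (1/(1/a)) := by
        simp only [h1, ENNReal.one_rpow, lintegral_const, Measure.restrict_apply,
          MeasurableSet.univ, univ_inter, Real.volume_Ioc]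
        rw [show s + 1 - s = 1 by ring, ENNReal.ofReal_one]; simp
    _ = _ := by rw [one_div_one_div]


/-- Let `δ : [0,∞) → ℝ` be nonnegative, measurable, and locally
integrable, let `c > 0`, `K > 0`, and suppose `∫_t^∞ δ(τ) dτ ≤ K e^{-ct}` for all
`t ≥ 0`. Then for every `a ∈ (0,1)` and every `t ≥ 0` one has
`∫_t^∞ δ(τ)^a dτ ≤ (K^a / (1 - e^{-ca})) · e^{-cat}`. -/
theorem tail_decay_of_power
    (δ : ℝ → ℝ) (c K : ℝ)
    (hmeas : Measurable δ)
    (hnonneg : ∀ t, 0 ≤ t → 0 ≤ δ t)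
    (hloc : LocallyIntegrableOn δ (Ici 0))
    (hc : 0 < c) (hK : 0 < K)
    (htail : ∀ t, 0 ≤ t →
      ∫⁻ τ in Ioi t, ENNReal.ofReal (δ τ) ≤ ENNReal.ofReal (K * Real.exp (-c * t))) :
    ∀ a, a ∈ Ioo (0 : ℝ) 1 → ∀ t, 0 ≤ t →
      ∫⁻ τ in Ioi t, ENNReal.ofReal (δ τ ^ a)
        ≤ ENNReal.ofReal (K ^ a / (1 - Real.exp (-c * a)) * Real.exp (-c * a * t)) := by
  intro a ha t ht
  have hca : 0 < c * a := mul_pos hc ha.1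
  have hr1 : Real.exp (-c * a) < 1 := by
    rw [Real.exp_lt_one_iff]; nlinarith
  have hrpos : (0:ℝ) < 1 - Real.exp (-c * a) := by linarith
  -- decomposition of Ioi t
  have hdecomp : Ioi t = ⋃ n : ℕ, Ioc (t + n) (t + n + 1) := by
    ext x
    simp only [mem_Ioi, mem_iUnion, mem_Ioc]
    constructor
    · intro hx
      have hpos : 0 < x - t := sub_pos.mpr hx
      have hm1 : 1 ≤ ⌈x - t⌉₊ := Nat.one_le_ceil_iff.mpr hpos
      refine ⟨⌈x - t⌉₊ - 1, ?_, ?_⟩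
      · have h1 : ((⌈x - t⌉₊ - 1 : ℕ) : ℝ) = (⌈x - t⌉₊ : ℝ) - 1 := by
          push_cast [hm1]; ring
        have h2 := Nat.ceil_lt_add_one hpos.le
        rw [h1]; linarith
      · have h1 : ((⌈x - t⌉₊ - 1 : ℕ) : ℝ) = (⌈x - t⌉₊ : ℝ) - 1 := by
          push_cast [hm1]; ring
        have h2 := Nat.le_ceil (x - t)
        rw [h1]; linarith
    · rintro ⟨n, h1, _⟩
      have : (0:ℝ) ≤ n := Nat.cast_nonneg n
      linarith
  have hdisj : Pairwise (Function.onFun Disjoint fun n : ℕ => Ioc (t + n) (t + n + 1)) := by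
    have key : ∀ m n : ℕ, m < n →
        Disjoint (Ioc (t + m) (t + m + 1)) (Ioc (t + n) (t + n + 1)) := by
      intro m n hmn
      rw [Set.disjoint_left]
      intro x hx1 hx2
      have : (m:ℝ) + 1 ≤ n := by exact_mod_cast hmn
      have := hx1.2; have := hx2.1
      linarith
    intro m n hmn
    rcases lt_or_gt_of_ne hmn with h | h
    · exact key m n h
    · exact (key n m h).symm
  have hterm : ∀ n : ℕ,
      ∫⁻ τ in Ioc (t + n) (t + n + 1), ENNReal.ofReal (δ τ ^ a)
        ≤ ENNReal.ofReal (K ^ a * Real.exp (-c * a * t)) *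
            ENNReal.ofReal (Real.exp (-c * a)) ^ n := by
    intro n
    have hs : (0:ℝ) ≤ t + n := by positivity
    have e1 : ∫⁻ τ in Ioc (t + n) (t + n + 1), ENNReal.ofReal (δ τ ^ a)
        = ∫⁻ τ in Ioc (t + n) (t + n + 1), (ENNReal.ofReal (δ τ)) ^ a := by
      apply setLIntegral_congr_fun measurableSet_Ioc
      intro τ hτ; beta_reduce
      have hτ0 : 0 ≤ τ := le_trans hs hτ.1.le
      rw [ENNReal.ofReal_rpow_of_nonneg (hnonneg τ hτ0) ha.1.le]
    rw [e1]
    calc ∫⁻ τ in Ioc (t + n) (t + n + 1), (ENNReal.ofReal (δ τ)) ^ a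
        ≤ (∫⁻ τ in Ioc (t + n) (t + n + 1), ENNReal.ofReal (δ τ)) ^ a :=
          holder_step _ (hmeas.ennreal_ofReal) _ ha
      _ ≤ (∫⁻ τ in Ioi (t + n), ENNReal.ofReal (δ τ)) ^ a :=
          ENNReal.rpow_le_rpow (lintegral_mono_set Ioc_subset_Ioi_self) ha.1.le
      _ ≤ (ENNReal.ofReal (K * Real.exp (-c * (t + n)))) ^ a :=
          ENNReal.rpow_le_rpow (htail _ hs) ha.1.le
      _ = ENNReal.ofReal ((K * Real.exp (-c * (t + n))) ^ a) := by
          rw [ENNReal.ofReal_rpow_of_nonneg (by positivity) ha.1.le]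
      _ = ENNReal.ofReal (K ^ a * Real.exp (-c * a * t)) *
            ENNReal.ofReal (Real.exp (-c * a)) ^ n := by
          rw [← ENNReal.ofReal_pow (Real.exp_nonneg _), ← ENNReal.ofReal_mul (by positivity)]
          congr 1
          rw [Real.mul_rpow hK.le (Real.exp_nonneg _), ← Real.exp_nat_mul,
            ← Real.exp_mul, mul_assoc (K ^ a), ← Real.exp_add]
          congr 1
          ring
  have hr : ENNReal.ofReal (Real.exp (-c * a)) < 1 := by
    rw [← ENNReal.ofReal_one]
    exact ENNReal.ofReal_lt_ofReal_iff_of_nonneg (Real.exp_nonneg _) |>.mpr hr1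
  calc ∫⁻ τ in Ioi t, ENNReal.ofReal (δ τ ^ a)
      = ∑' n : ℕ, ∫⁻ τ in Ioc (t + n) (t + n + 1), ENNReal.ofReal (δ τ ^ a) := by
        rw [hdecomp, lintegral_iUnion (fun _ => measurableSet_Ioc) hdisj]
    _ ≤ ∑' n : ℕ, ENNReal.ofReal (K ^ a * Real.exp (-c * a * t)) *
          ENNReal.ofReal (Real.exp (-c * a)) ^ n := ENNReal.tsum_le_tsum hterm
    _ = ENNReal.ofReal (K ^ a * Real.exp (-c * a * t)) *
          (1 - ENNReal.ofReal (Real.exp (-c * a)))⁻¹ := by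
        rw [ENNReal.tsum_mul_left, ENNReal.tsum_geometric]
    _ = ENNReal.ofReal (K ^ a / (1 - Real.exp (-c * a)) * Real.exp (-c * a * t)) := by
        rw [← ENNReal.ofReal_one, ← ENNReal.ofReal_sub _ (Real.exp_nonneg _),
          ← ENNReal.ofReal_inv_of_pos hrpos, ← ENNReal.ofReal_mul (by positivity)]
        congr 1
        field_simp
end
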